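/- arXiv:0804.4165 — 5 statements merged into one kernel-verified Lean document; each statement's English description precedes it below -/
import Mathlib

section
/- For every morphism σ: T → S of n-ordinals (1 ≤ n), there exists a factorisation σ = ν ∘ π where π: T → T' is a quasibijection (a map of n-ordinals that is a bijection of underlying sets), ν: T' → S is order preserving (preserves the induced total orders), and π preserves the total order on each fiber of ν. -/
/-- An `n`-ordinal: a set with relations `<_0, …, <_{n-1}` satisfying nonreflexivity,
trichotomy over all levels, and the rule `a <_p b, b <_q c ⟹ a <_{min p q} c`. -/
structure NOrdinal (n : ℕ) (T : Type) : Type where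
  rel : Fin n → T → T → Prop
  irrefl : ∀ p a, ¬ rel p a a
  trich : ∀ a b : T, a ≠ b →
    ∃! pd : Fin n × Bool, if pd.2 then rel pd.1 a b else rel pd.1 b a
  trans : ∀ p q a b c, rel p a b → rel q b c → rel (min p q) a c

/-- The total order induced by an `n`-ordinal: `a < b` iff `a <_r b` for some `r`. -/
def NOrdinal.tlt {n : ℕ} {T : Type} (O : NOrdinal n T) (a b : T) : Prop :=
  ∃ r, O.rel r a b

/-- A map of `n`-ordinals: `i <_p j` implies `σ i <_r σ j` for some `r ≥ p`,
or `σ i = σ j`, or `σ j <_r σ i` for some `r > p`. -/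
def IsNOrdMap {n : ℕ} {T S : Type} (OT : NOrdinal n T) (OS : NOrdinal n S)
    (σ : T → S) : Prop :=
  ∀ p a b, OT.rel p a b →
    (∃ r, p ≤ r ∧ OS.rel r (σ a) (σ b)) ∨ σ a = σ b ∨
    (∃ r, p < r ∧ OS.rel r (σ b) (σ a))

/-!
Take `π = id` and refine the pullback of `OS` along `σ` lexicographically: points in different
fibres of `σ` compare as their images do in `S`, points in a common fibre compare by the total
order of `OT`, placed at the top level `n - 1`. Since the top level dominates every level, the
transitivity rule survives and `id` stays a map of `n`-ordinals, while `σ` becomes order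
preserving by construction.
-/

namespace NOrdinal

variable {n : ℕ} {T S : Type}

theorem rel_asymm (O : NOrdinal n T) {p q : Fin n} {a b : T}
    (hab : O.rel p a b) (hba : O.rel q b a) : False := by
  have hne : a ≠ b := by rintro rfl; exact O.irrefl p a hab
  obtain ⟨pd, -, huniq⟩ := O.trich a b hne
  have hp : (p, true) = pd := huniq (p, true) (by simpa using hab)
  have hq : (q, false) = pd := huniq (q, false) (by simpa using hba)
  simpa using congrArg Prod.snd (hp.trans hq.symm)

instance (O : NOrdinal n T) : IsStrictTotalOrder T O.tlt where
  irrefl a := fun ⟨p, hp⟩ => O.irrefl p a hp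
  trans _ _ _ := fun ⟨p, hp⟩ ⟨q, hq⟩ => ⟨min p q, O.trans p q _ _ _ hp hq⟩
  trichotomous a b hab hba := by
    by_contra hne
    obtain ⟨⟨p, d⟩, hpd, -⟩ := O.trich a b hne
    cases d
    · exact hba ⟨p, by simpa using hpd⟩
    · exact hab ⟨p, by simpa using hpd⟩

open Classical in
def comapLexRel (OS : NOrdinal (n + 1) S) (σ : T → S) (lt : T → T → Prop)
    (r : Fin (n + 1)) (a b : T) : Prop :=
  if σ a = σ b then r = Fin.last n ∧ lt a b else OS.rel r (σ a) (σ b)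

section comapLex

variable (OS : NOrdinal (n + 1) S) (σ : T → S) (lt : T → T → Prop)
variable {r : Fin (n + 1)} {a b : T}

theorem comapLexRel_of_eq (h : σ a = σ b) :
    comapLexRel OS σ lt r a b ↔ r = Fin.last n ∧ lt a b := by
  simp [comapLexRel, h]

theorem comapLexRel_of_ne (h : σ a ≠ σ b) :
    comapLexRel OS σ lt r a b ↔ OS.rel r (σ a) (σ b) := by
  simp [comapLexRel, h]

theorem comapLexRel_trans [IsTrans T lt] (p q : Fin (n + 1)) (a b c : T)
    (hab : comapLexRel OS σ lt p a b) (hbc : comapLexRel OS σ lt q b c) :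
    comapLexRel OS σ lt (min p q) a c := by
  by_cases h₁ : σ a = σ b <;> by_cases h₂ : σ b = σ c
  · rw [comapLexRel_of_eq OS σ lt h₁] at hab
    rw [comapLexRel_of_eq OS σ lt h₂] at hbc
    rw [comapLexRel_of_eq OS σ lt (h₁.trans h₂), hab.1, hbc.1, min_self]
    exact ⟨rfl, _root_.trans hab.2 hbc.2⟩
  · rw [comapLexRel_of_eq OS σ lt h₁] at hab
    rw [comapLexRel_of_ne OS σ lt h₂] at hbc
    rw [comapLexRel_of_ne OS σ lt (h₁ ▸ h₂), hab.1, min_eq_right (Fin.le_last q), h₁]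
    exact hbc
  · rw [comapLexRel_of_ne OS σ lt h₁] at hab
    rw [comapLexRel_of_eq OS σ lt h₂] at hbc
    rw [comapLexRel_of_ne OS σ lt (h₂ ▸ h₁), hbc.1, min_eq_left (Fin.le_last p), ← h₂]
    exact hab
  · rw [comapLexRel_of_ne OS σ lt h₁] at hab
    rw [comapLexRel_of_ne OS σ lt h₂] at hbc
    have h₃ : σ a ≠ σ c := fun h => OS.rel_asymm hab (h ▸ hbc)
    rw [comapLexRel_of_ne OS σ lt h₃]
    exact OS.trans p q _ _ _ hab hbc

variable [IsStrictTotalOrder T lt]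

theorem comapLexRel_trich (a b : T) (hab : a ≠ b) :
    ∃! pd : Fin (n + 1) × Bool,
      if pd.2 then comapLexRel OS σ lt pd.1 a b else comapLexRel OS σ lt pd.1 b a := by
  by_cases h : σ a = σ b
  · simp only [comapLexRel_of_eq OS σ lt h, comapLexRel_of_eq OS σ lt h.symm]
    rcases trichotomous_of lt a b with hlt | rfl | hlt
    · refine ⟨(Fin.last n, true), by simpa using hlt, ?_⟩
      rintro ⟨q, _ | _⟩ ⟨rfl, hq⟩
      · exact absurd hq (asymm_of lt hlt)
      · rfl
    · exact absurd rfl hab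
    · refine ⟨(Fin.last n, false), by simpa using hlt, ?_⟩
      rintro ⟨q, _ | _⟩ ⟨rfl, hq⟩
      · rfl
      · exact absurd hq (asymm_of lt hlt)
  · simp only [comapLexRel_of_ne OS σ lt h, comapLexRel_of_ne OS σ lt (Ne.symm h)]
    exact OS.trich (σ a) (σ b) h

def comapLex : NOrdinal (n + 1) T where
  rel := comapLexRel OS σ lt
  irrefl _ a h := irrefl_of lt a ((comapLexRel_of_eq OS σ lt rfl).1 h).2
  trich := comapLexRel_trich OS σ lt
  trans := comapLexRel_trans OS σ lt

theorem isNOrdMap_comapLex : IsNOrdMap (comapLex OS σ lt) OS σ := by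
  intro p a b hab
  by_cases h : σ a = σ b
  · exact Or.inr (Or.inl h)
  · exact Or.inl ⟨p, le_rfl, (comapLexRel_of_ne OS σ lt h).1 hab⟩

theorem tlt_of_comapLex_tlt (hab : (comapLex OS σ lt).tlt a b) :
    OS.tlt (σ a) (σ b) ∨ σ a = σ b := by
  obtain ⟨r, hr⟩ := hab
  by_cases h : σ a = σ b
  · exact Or.inr h
  · exact Or.inl ⟨r, (comapLexRel_of_ne OS σ lt h).1 hr⟩

theorem comapLex_tlt_of_eq (h : σ a = σ b) (hab : lt a b) : (comapLex OS σ lt).tlt a b :=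
  ⟨Fin.last n, (comapLexRel_of_eq OS σ lt h).2 ⟨rfl, hab⟩⟩

end comapLex

theorem isNOrdMap_id_comapLex {OT : NOrdinal (n + 1) T} {OS : NOrdinal (n + 1) S} {σ : T → S}
    (hσ : IsNOrdMap OT OS σ) : IsNOrdMap OT (comapLex OS σ OT.tlt) id := by
  intro p a b hab
  by_cases h : σ a = σ b
  · exact Or.inl ⟨Fin.last n, Fin.le_last p, (comapLexRel_of_eq OS σ _ h).2 ⟨rfl, p, hab⟩⟩
  · rcases hσ p a b hab with ⟨r, hpr, hr⟩ | h' | ⟨r, hpr, hr⟩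
    · exact Or.inl ⟨r, hpr, (comapLexRel_of_ne OS σ _ h).2 hr⟩
    · exact absurd h' h
    · exact Or.inr (Or.inr ⟨r, hpr, (comapLexRel_of_ne OS σ _ (Ne.symm h)).2 hr⟩)

end NOrdinal

theorem factorisation_general {n : ℕ} (hn : 1 ≤ n) {T S : Type}
    (OT : NOrdinal n T) (OS : NOrdinal n S) (σ : T → S)
    (hσ : IsNOrdMap OT OS σ) :
    ∃ (O' : NOrdinal n T) (π : T ≃ T) (ν : T → S),
      -- π is a quasibijection (a bijective map of n-ordinals)
      IsNOrdMap OT O' π ∧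
      -- ν is a map of n-ordinals which is order preserving for the total orders
      IsNOrdMap O' OS ν ∧
      (∀ a b : T, O'.tlt a b → OS.tlt (ν a) (ν b) ∨ ν a = ν b) ∧
      -- π preserves the total order on each fiber of ν
      (∀ a b : T, ν (π a) = ν (π b) → OT.tlt a b → O'.tlt (π a) (π b)) ∧
      -- σ = ν ∘ π
      σ = ν ∘ π := by
  obtain ⟨m, rfl⟩ := Nat.exists_eq_add_of_le' hn
  exact ⟨NOrdinal.comapLex OS σ OT.tlt, Equiv.refl T, σ, NOrdinal.isNOrdMap_id_comapLex hσ,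
    NOrdinal.isNOrdMap_comapLex OS σ OT.tlt,
    fun _ _ => NOrdinal.tlt_of_comapLex_tlt OS σ OT.tlt,
    fun _ _ => NOrdinal.comapLex_tlt_of_eq OS σ OT.tlt, rfl⟩

theorem factorisation {n : ℕ} (hn : 1 ≤ n) {T S : Type} [Finite T] [Finite S]
    (OT : NOrdinal n T) (OS : NOrdinal n S) (σ : T → S)
    (hσ : IsNOrdMap OT OS σ) :
    ∃ (O' : NOrdinal n T) (π : T ≃ T) (ν : T → S),
      -- π is a quasibijection (a bijective map of n-ordinals)
      IsNOrdMap OT O' π ∧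
      -- ν is a map of n-ordinals which is order preserving for the total orders
      IsNOrdMap O' OS ν ∧
      (∀ a b : T, O'.tlt a b → OS.tlt (ν a) (ν b) ∨ ν a = ν b) ∧
      -- π preserves the total order on each fiber of ν
      (∀ a b : T, ν (π a) = ν (π b) → OT.tlt a b → O'.tlt (π a) (π b)) ∧
      -- σ = ν ∘ π
      σ = ν ∘ π :=
  factorisation_general hn OT OS σ hσ
end

section
/- In a composite of quasibijections of 2-ordinals T → S → R, if the first map reverses the total order of two elements i, j of T, then the second map cannot reverse the order of their images; consequently the set of pairs whose order is reversed by the composite is the disjoint union of the pairs reversed by the first map and the pairs (of images) reversed by the second map. -/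
namespace NOrdinal

variable {n : ℕ} {T : Type} (O : NOrdinal n T)

lemma ne_of_rel {p : Fin n} {a b : T} (h : O.rel p a b) : a ≠ b := by
  rintro rfl
  exact O.irrefl p a h

lemma not_rel_of_rel {p q : Fin n} {a b : T} (h : O.rel p a b) : ¬ O.rel q b a := by
  intro h'
  obtain ⟨_, _, huniq⟩ := O.trich a b (O.ne_of_rel h)
  have hab : (p, true) = (q, false) :=
    (huniq (p, true) (by simpa using h)).trans (huniq (q, false) (by simpa using h')).symm
  simp at hab

lemma not_tlt_of_tlt {a b : T} (h : O.tlt a b) : ¬ O.tlt b a := by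
  obtain ⟨p, hp⟩ := h
  rintro ⟨q, hq⟩
  exact O.not_rel_of_rel hp hq

lemma ne_of_tlt {a b : T} (h : O.tlt a b) : a ≠ b := by
  obtain ⟨p, hp⟩ := h
  exact O.ne_of_rel hp

lemma tlt_or_tlt_of_ne {a b : T} (h : a ≠ b) : O.tlt a b ∨ O.tlt b a := by
  obtain ⟨⟨p, _ | _⟩, hp, -⟩ := O.trich a b h
  · exact Or.inr ⟨p, by simpa using hp⟩
  · exact Or.inl ⟨p, by simpa using hp⟩

end NOrdinal

namespace IsNOrdMap

variable {n : ℕ} {T S : Type} {OT : NOrdinal n T} {OS : NOrdinal n S} {f : T → S}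

lemma exists_lt_rel_of_tlt_swap (hf : IsNOrdMap OT OS f) {p : Fin n} {a b : T}
    (h : OT.rel p a b) (hrev : OS.tlt (f b) (f a)) : ∃ r, p < r ∧ OS.rel r (f b) (f a) := by
  rcases hf p a b h with ⟨r, -, hr⟩ | heq | hlt
  · exact absurd hrev (OS.not_tlt_of_tlt ⟨r, hr⟩)
  · exact absurd heq.symm (OS.ne_of_tlt hrev)
  · exact hlt

lemma tlt_of_rel_last {OT : NOrdinal (n + 1) T} {OS : NOrdinal (n + 1) S}
    (hf : IsNOrdMap OT OS f) (hinj : Function.Injective f) {a b : T}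
    (h : OT.rel (Fin.last n) a b) : OS.tlt (f a) (f b) := by
  rcases hf _ a b h with ⟨r, -, hr⟩ | heq | ⟨r, hr, -⟩
  · exact ⟨r, hr⟩
  · exact absurd (hinj heq) (OT.ne_of_rel h)
  · exact absurd hr (Fin.le_last r).not_gt

lemma rel_one_of_tlt_swap {OT : NOrdinal 2 T} {OS : NOrdinal 2 S}
    (hf : IsNOrdMap OT OS f) {a b : T} (h : OT.tlt a b) (hrev : OS.tlt (f b) (f a)) :
    OS.rel 1 (f b) (f a) := by
  obtain ⟨p, hp⟩ := h
  obtain ⟨r, hpr, hr⟩ := hf.exists_lt_rel_of_tlt_swap hp hrev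
  obtain rfl : r = 1 := by omega
  exact hr

end IsNOrdMap

lemma IsNOrdMap.tlt_comp_of_tlt_swap {T S R : Type}
    {OT : NOrdinal 2 T} {OS : NOrdinal 2 S} {OR : NOrdinal 2 R} {σ : T → S} {ξ : S → R}
    (hσ : IsNOrdMap OT OS σ) (hξ : IsNOrdMap OS OR ξ) (hξinj : Function.Injective ξ)
    {i j : T} (hij : OT.tlt i j) (hrev : OS.tlt (σ j) (σ i)) :
    OR.tlt (ξ (σ j)) (ξ (σ i)) :=
  hξ.tlt_of_rel_last hξinj (hσ.rel_one_of_tlt_swap hij hrev)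

theorem quasibijection_comp_reversals {T S R : Type}
    (OT : NOrdinal 2 T) (OS : NOrdinal 2 S) (OR : NOrdinal 2 R)
    (σ : T ≃ S) (ξ : S ≃ R)
    (hσ : IsNOrdMap OT OS σ) (hξ : IsNOrdMap OS OR ξ) :
    -- if σ reverses the total order of i, j then ξ cannot reverse the order of the images
    (∀ i j : T, OT.tlt i j → OS.tlt (σ j) (σ i) → ¬ OR.tlt (ξ (σ i)) (ξ (σ j))) ∧
    -- the pairs reversed by the composite are the disjoint union of the pairs reversed
    -- by σ and the pairs (of images) reversed by ξ
    (∀ i j : T, OT.tlt i j →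
      (OR.tlt (ξ (σ j)) (ξ (σ i)) ↔
        OS.tlt (σ j) (σ i) ∨ (OS.tlt (σ i) (σ j) ∧ OR.tlt (ξ (σ j)) (ξ (σ i))))) := by
  have kept := fun i j (hij : OT.tlt i j) (hrev : OS.tlt (σ j) (σ i)) ↦
    hσ.tlt_comp_of_tlt_swap hξ ξ.injective hij hrev
  refine ⟨fun i j hij hrev ↦ OR.not_tlt_of_tlt (kept i j hij hrev), fun i j hij ↦ ⟨?_, ?_⟩⟩
  · intro hR
    have hne : σ i ≠ σ j := fun h ↦ OR.ne_of_tlt hR (by rw [h])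
    rcases OS.tlt_or_tlt_of_ne hne with hkeep | hrev
    · exact Or.inr ⟨hkeep, hR⟩
    · exact Or.inl hrev
  · rintro (hrev | ⟨-, hR⟩)
    · exact kept i j hij hrev
    · exact hR
end

section
/- The Fox–Neuwirth cell FN_T associated to an n-ordinal T with k elements, consisting of configurations (x_1,...,x_k) of distinct points in R^n such that for i <_p j in T the unit vector u_{ij}(x) = (x_j - x_i)/|x_j - x_i| lies in the open hemisphere {y ∈ S^{n-1} : y_1 = ... = y_p = 0, y_{p+1} > 0}, is a convex subset of (R^n)^k. -/
/-- The unit vector from `x i` to `x j`. -/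
noncomputable def uvec {n k : ℕ} (x : Fin k → EuclideanSpace ℝ (Fin n))
    (i j : Fin k) : EuclideanSpace ℝ (Fin n) :=
  (‖x j - x i‖)⁻¹ • (x j - x i)

/-- The Fox–Neuwirth cell of an `n`-ordinal structure on `{1, …, k}`: configurations of
distinct points such that for `i <_p j` the unit vector `u_{ij}` lies in the open
hemisphere with first `p` coordinates zero and `(p+1)`-st coordinate positive. -/
def FoxNeuwirth {n k : ℕ} (O : NOrdinal n (Fin k)) :
    Set (Fin k → EuclideanSpace ℝ (Fin n)) :=
  { x | (∀ i j : Fin k, i ≠ j → x i ≠ x j) ∧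
        ∀ p (i j : Fin k), O.rel p i j →
          (∀ q : Fin n, (q : ℕ) < (p : ℕ) → uvec x i j q = 0) ∧ 0 < uvec x i j p }
/-!
The conditions cutting out the cell only involve the directions `u_{ij}`, and a direction
lies in the open hemisphere `{y₁ = ⋯ = y_p = 0, y_{p+1} > 0}` iff the difference `x_j - x_i`
lies in the (convex) cone over it. Hence the cell is an intersection of preimages of convex
cones under the linear maps `x ↦ x_j - x_i`, so itself a convex cone. Distinctness of the points
comes for free: by trichotomy any two of them are related at some level, and the origin lies in
none of these cones.
-/

namespace ConvexCone

variable {E : Type*} [NormedAddCommGroup E] [Module ℝ E]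

theorem inv_norm_smul_mem_iff (C : ConvexCone ℝ E) {v : E} :
    ‖v‖⁻¹ • v ∈ C ↔ v ∈ C := by
  rcases eq_or_ne v 0 with rfl | hv
  · simp
  have hpos : 0 < ‖v‖ := norm_pos_iff.mpr hv
  refine ⟨fun h => ?_, C.smul_mem (inv_pos.mpr hpos)⟩
  simpa [smul_smul, hpos.ne'] using C.smul_mem hpos h

end ConvexCone

def hemisphereCone {n : ℕ} (p : Fin n) : ConvexCone ℝ (EuclideanSpace ℝ (Fin n)) where
  carrier := {v | (∀ q : Fin n, (q : ℕ) < p → v q = 0) ∧ 0 < v p}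
  smul_mem' c hc v hv := ⟨fun q hq => by simp [hv.1 q hq], by simpa using mul_pos hc hv.2⟩
  add_mem' v hv w hw :=
    ⟨fun q hq => by simp [hv.1 q hq, hw.1 q hq], by simpa using add_pos hv.2 hw.2⟩

theorem zero_notMem_hemisphereCone {n : ℕ} (p : Fin n) :
    (0 : EuclideanSpace ℝ (Fin n)) ∉ hemisphereCone p :=
  fun h => h.2.ne' rfl

section FoxNeuwirth

variable {n k : ℕ} (O : NOrdinal n (Fin k))

def foxNeuwirthCone : ConvexCone ℝ (Fin k → EuclideanSpace ℝ (Fin n)) :=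
  ⨅ (p) (i) (j) (_ : O.rel p i j),
    (hemisphereCone p).comap
      (LinearMap.proj (R := ℝ) (φ := fun _ => EuclideanSpace ℝ (Fin n)) j - LinearMap.proj i)

variable {O} {x : Fin k → EuclideanSpace ℝ (Fin n)}

theorem mem_foxNeuwirthCone :
    x ∈ foxNeuwirthCone O ↔ ∀ p i j, O.rel p i j → x j - x i ∈ hemisphereCone p := by
  simp [foxNeuwirthCone, ConvexCone.mem_iInf, ConvexCone.mem_comap]

theorem ne_of_mem_foxNeuwirthCone (hx : x ∈ foxNeuwirthCone O) {i j : Fin k} (hij : i ≠ j) :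
    x i ≠ x j := by
  intro hxij
  obtain ⟨⟨p, d⟩, hpd, -⟩ := O.trich i j hij
  apply zero_notMem_hemisphereCone p
  cases d
  · simpa [hxij] using mem_foxNeuwirthCone.mp hx p j i (by simpa using hpd)
  · simpa [hxij] using mem_foxNeuwirthCone.mp hx p i j (by simpa using hpd)

theorem coe_foxNeuwirthCone : (foxNeuwirthCone O : Set _) = FoxNeuwirth O := by
  ext x
  refine ⟨fun hx => ⟨fun i j => ne_of_mem_foxNeuwirthCone hx, fun p i j hr => ?_⟩,
    fun ⟨_, hx⟩ => mem_foxNeuwirthCone.mpr fun p i j hr => ?_⟩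
  · exact (hemisphereCone p).inv_norm_smul_mem_iff.mpr (mem_foxNeuwirthCone.mp hx p i j hr)
  · exact (hemisphereCone p).inv_norm_smul_mem_iff.mp (hx p i j hr)

end FoxNeuwirth

theorem foxNeuwirth_convex {n k : ℕ} (O : NOrdinal n (Fin k)) :
    Convex ℝ (FoxNeuwirth O) :=
  coe_foxNeuwirthCone (O := O) ▸ (foxNeuwirthCone O).convex
end

section
/- The configuration space Conf_k(R^n) is the union over all n-ordinals T with underlying set {1,...,k} (all n-ordinal structures, i.e., including all relabelings by permutations) of the Fox–Neuwirth cells FN_T, and these cells are pairwise disjoint. -/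
/-!
Every nonzero vector `v` of `ℝⁿ` has a leading coordinate `p` (its first nonzero one), and
exactly one of `v`, `-v` is positive there. For a configuration `x`, declaring `i <_p j` when
`x j - x i` has leading coordinate `p` and is positive there gives an `n`-ordinal, because the
leading coordinate of a sum of two such vectors is the `min` of theirs; `x` lies in its cell.
Conversely, on the cell of any `n`-ordinal the relation `i <_p j` is forced to be this sign
condition on `x j - x i`, so distinct `n`-ordinals have disjoint cells.
-/

def LexPosAt {ι 𝕜 : Type*} [LT ι] [Zero 𝕜] [LT 𝕜] (p : ι) (v : ι → 𝕜) : Prop :=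
  (∀ q < p, v q = 0) ∧ 0 < v p

section LeadingCoordinate

variable {ι 𝕜 : Type*} [LinearOrder ι] {p p' : ι} {v w : ι → 𝕜}

lemma eq_of_forall_lt_apply_eq_zero [Zero 𝕜] (hp : ∀ q < p, v q = 0) (hvp : v p ≠ 0)
    (hp' : ∀ q < p', v q = 0) (hvp' : v p' ≠ 0) : p = p' := by
  by_contra hne
  rcases lt_or_gt_of_ne hne with hlt | hlt
  · exact hvp (hp' p hlt)
  · exact hvp' (hp p' hlt)

namespace LexPosAt

lemma ne_zero [Zero 𝕜] [Preorder 𝕜] (h : LexPosAt p v) : v ≠ 0 := by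
  rintro rfl
  exact lt_irrefl _ h.2

lemma eq [Zero 𝕜] [Preorder 𝕜] (h : LexPosAt p v) (h' : LexPosAt p' v) : p = p' :=
  eq_of_forall_lt_apply_eq_zero h.1 h.2.ne' h'.1 h'.2.ne'

variable [AddCommGroup 𝕜] [PartialOrder 𝕜] [IsOrderedAddMonoid 𝕜]

lemma neg_iff : LexPosAt p (-v) ↔ (∀ q < p, v q = 0) ∧ v p < 0 := by
  simp only [LexPosAt, Pi.neg_apply, neg_eq_zero, neg_pos]

lemma not_neg (h : LexPosAt p v) : ¬ LexPosAt p' (-v) := by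
  intro h'
  obtain ⟨hp', hvp'⟩ := neg_iff.mp h'
  obtain rfl := eq_of_forall_lt_apply_eq_zero h.1 h.2.ne' hp' hvp'.ne
  exact lt_asymm h.2 hvp'

lemma add {q : ι} (hv : LexPosAt p v) (hw : LexPosAt q w) : LexPosAt (min p q) (v + w) := by
  refine ⟨fun r hr => ?_, ?_⟩
  · rw [lt_min_iff] at hr
    simp only [Pi.add_apply, hv.1 r hr.1, hw.1 r hr.2, add_zero]
  rcases lt_trichotomy p q with hpq | rfl | hqp
  · rw [min_eq_left hpq.le, Pi.add_apply, hw.1 p hpq, add_zero]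
    exact hv.2
  · rw [min_self, Pi.add_apply]
    exact add_pos hv.2 hw.2
  · rw [min_eq_right hqp.le, Pi.add_apply, hv.1 q hqp, zero_add]
    exact hw.2

end LexPosAt

lemma lexPosAt_smul_iff [Field 𝕜] [LinearOrder 𝕜] [IsStrictOrderedRing 𝕜] {c : 𝕜}
    (hc : 0 < c) : LexPosAt p (c • v) ↔ LexPosAt p v := by
  simp only [LexPosAt, Pi.smul_apply, smul_eq_mul, mul_eq_zero, hc.ne', false_or,
    mul_pos_iff_of_pos_left hc]

lemma existsUnique_lexPosAt_or_neg [WellFoundedLT ι] [AddCommGroup 𝕜] [LinearOrder 𝕜]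
    [IsOrderedAddMonoid 𝕜] (hv : v ≠ 0) :
    ∃! pd : ι × Bool, if pd.2 then LexPosAt pd.1 v else LexPosAt pd.1 (-v) := by
  obtain ⟨m, hvm, hmin⟩ := wellFounded_lt.has_min {q | v q ≠ 0}
    (Function.ne_iff.mp hv)
  have hbelow : ∀ q < m, v q = 0 := fun q hq => not_not.mp fun h => hmin q h hq
  rcases lt_or_gt_of_ne hvm with hneg | hpos
  · have hm : LexPosAt m (-v) := LexPosAt.neg_iff.mpr ⟨hbelow, hneg⟩
    refine ⟨(m, false), hm, ?_⟩
    rintro ⟨p, _ | _⟩ hp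
    · exact Prod.ext (LexPosAt.eq (v := -v) hp hm) rfl
    · exact absurd hm (LexPosAt.not_neg hp)
  · have hm : LexPosAt m v := ⟨hbelow, hpos⟩
    refine ⟨(m, true), hm, ?_⟩
    rintro ⟨p, _ | _⟩ hp
    · exact absurd hp hm.not_neg
    · exact Prod.ext (LexPosAt.eq hp hm) rfl

end LeadingCoordinate

def NOrdinal.ofConf {n : ℕ} {T 𝕜 : Type} [AddCommGroup 𝕜] [LinearOrder 𝕜]
    [IsOrderedAddMonoid 𝕜] (x : T → Fin n → 𝕜) (hx : Function.Injective x) :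
    NOrdinal n T where
  rel p i j := LexPosAt p (x j - x i)
  irrefl p i h := h.ne_zero (sub_self _)
  trich i j hij := by
    simpa only [← neg_sub (x j) (x i)] using
      existsUnique_lexPosAt_or_neg (sub_ne_zero.mpr (hx.ne hij).symm)
  trans p q i j l hij hjl := by
    simpa only [sub_add_sub_cancel'] using hij.add hjl

section FoxNeuwirth

variable {n k : ℕ} {x : Fin k → EuclideanSpace ℝ (Fin n)} {p : Fin n} {i j : Fin k}

lemma lexPosAt_uvec_iff :
    LexPosAt p (WithLp.ofLp (uvec x i j)) ↔
      LexPosAt p (WithLp.ofLp (x j) - WithLp.ofLp (x i)) := by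
  rw [← WithLp.ofLp_sub]
  rcases eq_or_ne (x j - x i) 0 with h | h
  · simp only [uvec, h, smul_zero]
  · exact lexPosAt_smul_iff (inv_pos.mpr (norm_pos_iff.mpr h))

lemma rel_iff_lexPosAt_of_mem_foxNeuwirth {O : NOrdinal n (Fin k)} (hx : x ∈ FoxNeuwirth O) :
    O.rel p i j ↔ LexPosAt p (WithLp.ofLp (x j) - WithLp.ofLp (x i)) := by
  have rel_lexPosAt {p : Fin n} {i j : Fin k} (h : O.rel p i j) :
      LexPosAt p (WithLp.ofLp (x j) - WithLp.ofLp (x i)) :=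
    lexPosAt_uvec_iff.mp (hx.2 p i j h)
  refine ⟨rel_lexPosAt, fun h => ?_⟩
  have hij : i ≠ j := by
    rintro rfl
    exact h.ne_zero (sub_self _)
  obtain ⟨⟨p', _ | _⟩, hp', -⟩ := O.trich i j hij
  · exact absurd (neg_sub (WithLp.ofLp (x j)) _ ▸ rel_lexPosAt hp') h.not_neg
  · exact (rel_lexPosAt hp').eq h ▸ hp'

lemma mem_foxNeuwirth_ofConf (hx : Function.Injective x) :
    x ∈ FoxNeuwirth (NOrdinal.ofConf (WithLp.ofLp ∘ x) ((WithLp.ofLp_injective 2).comp hx)) :=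
  ⟨fun _ _ hij => hx.ne hij, fun _ _ _ h => lexPosAt_uvec_iff.mpr h⟩

end FoxNeuwirth

theorem conf_eq_union_foxNeuwirth (n k : ℕ) :
    -- the configuration space is the union of the Fox–Neuwirth cells over all
    -- n-ordinal structures on {1, …, k}
    ({ x : Fin k → EuclideanSpace ℝ (Fin n) | ∀ i j : Fin k, i ≠ j → x i ≠ x j }
        = ⋃ O : NOrdinal n (Fin k), FoxNeuwirth O) ∧
    -- the cells of distinct n-ordinal structures are pairwise disjoint
    (∀ O O' : NOrdinal n (Fin k),
      (¬ ∀ p (i j : Fin k), O.rel p i j ↔ O'.rel p i j) →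
        Disjoint (FoxNeuwirth O) (FoxNeuwirth O')) := by
  refine ⟨Set.ext fun x => ⟨fun hx => ?_, ?_⟩, fun O O' hne => ?_⟩
  · exact Set.mem_iUnion.mpr
      ⟨_, mem_foxNeuwirth_ofConf (Function.injective_iff_pairwise_ne.mpr hx)⟩
  · rintro ⟨_, ⟨O, rfl⟩, hO⟩
    exact hO.1
  · refine Set.disjoint_left.mpr fun x hO hO' => hne fun p i j => ?_
    rw [rel_iff_lexPosAt_of_mem_foxNeuwirth hO, rel_iff_lexPosAt_of_mem_foxNeuwirth hO']
end

section
/- For each configuration x in Conf_k(R^n), define relations on {1,...,k} by: i <_p j iff the unit vector u_{ij}(x) has its first p coordinates zero and its (p+1)-st coordinate strictly positive. Then these relations make {1,...,k} into an n-ordinal. -/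
/-!
`i <_p j` says that `x j - x i` is lexicographically positive with leading (first nonzero)
coordinate `p`. Dividing by the positive norm changes nothing, so this is a
property of `x j - x i` alone. Trichotomy is the fact that a nonzero vector has exactly one
leading coordinate, at which either it or its negative is positive; the transitivity rule comes
from `x l - x i = (x j - x i) + (x l - x j)`, whose leading coordinate is the smaller of the two
leading coordinates, where both summands are nonnegative and one is positive.
-/

def IsLexPosAt {ι α : Type*} [LT ι] [Zero α] [LT α] (p : ι) (v : ι → α) : Prop :=
  (∀ q < p, v q = 0) ∧ 0 < v p

namespace IsLexPosAt

variable {ι α : Type*} [LinearOrder ι] {p q : ι} {v w : ι → α}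

section Preorder

variable [Zero α] [Preorder α]

theorem ne_zero (h : IsLexPosAt p v) : v ≠ 0 := by
  rintro rfl
  exact h.2.ne rfl

theorem nonneg_of_le (h : IsLexPosAt q v) (hpq : p ≤ q) : 0 ≤ v p := by
  rcases hpq.lt_or_eq with hlt | rfl
  · exact (h.1 p hlt).ge
  · exact h.2.le

theorem unique (hp : IsLexPosAt p v) (hq : IsLexPosAt q v) : p = q := by
  by_contra hne
  rcases lt_or_gt_of_ne hne with hlt | hlt
  · exact hp.2.ne' (hq.1 p hlt)
  · exact hq.2.ne' (hp.1 q hlt)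

end Preorder

section OrderedGroup

variable [AddCommGroup α] [LinearOrder α] [IsOrderedAddMonoid α]

theorem not_neg (hp : IsLexPosAt p v) : ¬ IsLexPosAt q (-v) := by
  intro hq
  obtain rfl : p = q := by
    by_contra hne
    rcases lt_or_gt_of_ne hne with hlt | hlt
    · exact hp.2.ne' (neg_eq_zero.1 (hq.1 p hlt))
    · exact hq.2.ne' (by simp [hp.1 q hlt])
  exact (neg_pos.1 hq.2).not_gt hp.2

theorem add (hv : IsLexPosAt p v) (hw : IsLexPosAt q w) : IsLexPosAt (min p q) (v + w) := by
  wlog hpq : p ≤ q generalizing p q v w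
  · simpa only [min_comm, add_comm] using this hw hv (le_of_not_ge hpq)
  rw [min_eq_left hpq]
  refine ⟨fun r hr => ?_, add_pos_of_pos_of_nonneg hv.2 (hw.nonneg_of_le hpq)⟩
  simp [hv.1 r hr, hw.1 r (hr.trans_le hpq)]

end OrderedGroup

theorem smul_iff {ι 𝕜 : Type*} [LT ι] [Field 𝕜] [LinearOrder 𝕜] [IsStrictOrderedRing 𝕜]
    {p : ι} {v : ι → 𝕜} {c : 𝕜} (hc : 0 < c) : IsLexPosAt p (c • v) ↔ IsLexPosAt p v := by
  simp only [IsLexPosAt, Pi.smul_apply, smul_eq_mul, mul_eq_zero, hc.ne', false_or,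
    mul_pos_iff_of_pos_left hc]

end IsLexPosAt

theorem existsUnique_isLexPosAt_or_neg {ι α : Type*} [LinearOrder ι] [WellFoundedLT ι]
    [AddCommGroup α] [LinearOrder α] [IsOrderedAddMonoid α] {v : ι → α} (hv : v ≠ 0) :
    ∃! pd : ι × Bool, if pd.2 then IsLexPosAt pd.1 v else IsLexPosAt pd.1 (-v) := by
  have hsupp : {q | v q ≠ 0}.Nonempty := Function.ne_iff.1 hv
  set p := (wellFounded_lt (α := ι)).min _ hsupp
  have hbelow : ∀ q < p, v q = 0 := fun q hq => not_not.1 (WellFounded.notMem_of_lt_min hq)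
  rcases lt_or_gt_of_ne (wellFounded_lt.min_mem _ hsupp) with hneg | hpos
  · have hp : IsLexPosAt p (-v) := ⟨fun q hq => by simp [hbelow q hq], neg_pos.2 hneg⟩
    refine ⟨(p, false), hp, ?_⟩
    rintro ⟨q, _ | _⟩ hq
    · exact Prod.ext (hq.unique hp) rfl
    · exact absurd (neg_neg v ▸ hq) hp.not_neg
  · have hp : IsLexPosAt p v := ⟨hbelow, hpos⟩
    refine ⟨(p, true), hp, ?_⟩
    rintro ⟨q, _ | _⟩ hq
    · exact absurd hq hp.not_neg
    · exact Prod.ext (hq.unique hp) rfl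

theorem isLexPosAt_inv_norm_smul_iff {ι : Type*} [Fintype ι] [LT ι] {p : ι}
    (v : EuclideanSpace ℝ ι) : IsLexPosAt p ⇑(‖v‖⁻¹ • v) ↔ IsLexPosAt p ⇑v := by
  rcases eq_or_ne v 0 with rfl | hv
  · simp
  · rw [WithLp.ofLp_smul]
    exact IsLexPosAt.smul_iff (inv_pos.2 (norm_pos_iff.2 hv))

def NOrdinal.ofLex {n : ℕ} {T : Type} {α : Type*} [AddCommGroup α] [LinearOrder α]
    [IsOrderedAddMonoid α] (f : T → Fin n → α) (hf : Function.Injective f) : NOrdinal n T where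
  rel p a b := IsLexPosAt p (f b - f a)
  irrefl p a h := h.ne_zero (sub_self _)
  trich a b hab := by
    simpa only [neg_sub] using existsUnique_isLexPosAt_or_neg (sub_ne_zero.2 (hf.ne hab.symm))
  trans p q a b c hab hbc := by simpa only [sub_add_sub_cancel'] using hab.add hbc

theorem config_nOrdinal {n k : ℕ} (x : Fin k → EuclideanSpace ℝ (Fin n))
    (hx : ∀ i j : Fin k, i ≠ j → x i ≠ x j) :
    ∃ O : NOrdinal n (Fin k), ∀ p (i j : Fin k),
      O.rel p i j ↔
        ((∀ q : Fin n, (q : ℕ) < (p : ℕ) → uvec x i j q = 0) ∧ 0 < uvec x i j p) := by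
  have hinj : Function.Injective fun i => ⇑(x i) := fun i j hij =>
    not_not.1 fun hne => hx i j hne (WithLp.ofLp_injective 2 hij)
  refine ⟨NOrdinal.ofLex _ hinj, fun p i j => ?_⟩
  change IsLexPosAt p (⇑(x j) - ⇑(x i)) ↔ IsLexPosAt p ⇑(uvec x i j)
  rw [uvec, isLexPosAt_inv_norm_smul_iff, WithLp.ofLp_sub]
end
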